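/- With the exterior algebras Λ_q(u_+) (relations: v_1∧v_1=0, v_0∧v_1=−q²v_1∧v_0, v_0∧v_0=−q^{-1}(q−q^{-1})v_1∧v_{-1}, v_{-1}∧v_1=−v_1∧v_{-1}, v_{-1}∧v_0=−q²v_0∧v_{-1}, v_{-1}∧v_{-1}=0) and Λ_q(u_-) (relations: w_{-1}∧w_{-1}=0, w_0∧w_{-1}=−q²w_{-1}∧w_0, w_0∧w_0=−q(q−q^{-1})w_{-1}∧w_1, w_1∧w_{-1}=−w_{-1}∧w_1, w_1∧w_0=−q²w_0∧w_1, w_1∧w_1=0), and with the degree-2 pairing defined by ⟨w'⊗w, v⊗v'⟩ = ⟨w,v⟩⟨w',v'⟩ on lifts of wedge products to antisymmetric tensors, the nonzero degree-2 pairings are ⟨w_0∧w_1, v_1∧v_0⟩ = ⟨w_{-1}∧w_0, v_0∧v_{-1}⟩ = q^{-2}/(q²+q^{-2}) and ⟨w_{-1}∧w_1, v_1∧v_{-1}⟩ = 1/(q²+q^{-2}), where the lifts are given by π_+^{-1}(v_1∧v_0) = (q^{-2}/(q²+q^{-2}))(v_1⊗v_0 − q²v_0⊗v_1), π_+^{-1}(v_1∧v_{-1})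 = (1/(q²+q^{-2}))(v_1⊗v_{-1} − v_{-1}⊗v_1 − q(q−q^{-1})v_0⊗v_0), π_+^{-1}(v_0∧v_{-1}) = (q^{-2}/(q²+q^{-2}))(v_0⊗v_{-1} − q²v_{-1}⊗v_0), and similarly for Λ_q(u_-) with W_{-1} = w_{-1}⊗w_0−q²w_0⊗w_{-1}, W_0 = w_{-1}⊗w_1−w_1⊗w_{-1}−q^{-1}(q−q^{-1})w_0⊗w_0, W_1 = w_0⊗w_1−q²w_1⊗w_0. -/

import Mathlib

open Matrix

noncomputable section

-- Antisymmetric 2-tensors, written as matrices of coefficients: entry (a,b) is the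
-- coefficient of (basis a) ⊗ (basis b).  For u₊ the index is 0 ↦ v₁, 1 ↦ v₀, 2 ↦ v₋₁;
-- for u₋ the index i denotes the basis vector dual to v-index i (0 ↦ w₁, 1 ↦ w₀, 2 ↦ w₋₁).

/-- W₁ = w₀⊗w₁ − q² w₁⊗w₀. -/
def W1t (q : ℝ) : Matrix (Fin 3) (Fin 3) ℝ := Matrix.single 1 0 1 - Matrix.single 0 1 (q ^ 2)

/-- W₀ = w₋₁⊗w₁ − w₁⊗w₋₁ − q⁻¹(q−q⁻¹) w₀⊗w₀. -/
def W0t (q : ℝ) : Matrix (Fin 3) (Fin 3) ℝ :=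
  Matrix.single 2 0 1 - Matrix.single 0 2 1 - Matrix.single 1 1 (q⁻¹ * (q - q⁻¹))

/-- W₋₁ = w₋₁⊗w₀ − q² w₀⊗w₋₁. -/
def Wm1t (q : ℝ) : Matrix (Fin 3) (Fin 3) ℝ := Matrix.single 2 1 1 - Matrix.single 1 2 (q ^ 2)

/-- V₁ = v₁⊗v₀ − q² v₀⊗v₁. -/
def V1t (q : ℝ) : Matrix (Fin 3) (Fin 3) ℝ := Matrix.single 0 1 1 - Matrix.single 1 0 (q ^ 2)

/-- V₀ = v₁⊗v₋₁ − v₋₁⊗v₁ − q(q−q⁻¹) v₀⊗v₀. -/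
def V0t (q : ℝ) : Matrix (Fin 3) (Fin 3) ℝ :=
  Matrix.single 0 2 1 - Matrix.single 2 0 1 - Matrix.single 1 1 (q * (q - q⁻¹))

/-- V₋₁ = v₀⊗v₋₁ − q² v₋₁⊗v₀. -/
def Vm1t (q : ℝ) : Matrix (Fin 3) (Fin 3) ℝ := Matrix.single 1 2 1 - Matrix.single 2 1 (q ^ 2)

/-- The pairing of 2-tensors induced by ⟨w'⊗w, v⊗v'⟩ = ⟨w,v⟩⟨w',v'⟩ and ⟨w_i,v_j⟩ = δ_{ij};
in coefficient matrices it is the trace of the product. -/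
def pairT (W V : Matrix (Fin 3) (Fin 3) ℝ) : ℝ := Matrix.trace (W * V)

/-! Pairing with the matrix unit `single i j c` reads off `c` times the `(j, i)` coefficient, so
two lifts of different weight pair to zero (their supports are transposed-disjoint), while the
unscaled lifts of equal weight pair to `1 + q⁴ = q² (q² + q⁻²)` and `2 + (q - q⁻¹)² = q² + q⁻²`;
the normalising scalars of the lifts then give the stated values. -/

lemma pairT_smul_smul (a b : ℝ) (W V : Matrix (Fin 3) (Fin 3) ℝ) :
    pairT (a • W) (b • V) = a * b * pairT W V := by
  simp only [pairT, Matrix.smul_mul, Matrix.mul_smul, Matrix.trace_smul, smul_eq_mul]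
  ring

lemma pairT_sub_left (W W' V : Matrix (Fin 3) (Fin 3) ℝ) :
    pairT (W - W') V = pairT W V - pairT W' V := by
  simp only [pairT, Matrix.sub_mul, Matrix.trace_sub]

lemma pairT_single_left (i j : Fin 3) (c : ℝ) (V : Matrix (Fin 3) (Fin 3) ℝ) :
    pairT (Matrix.single i j c) V = c * V j i :=
  Matrix.trace_single_mul i j c V

section

attribute [local simp] pairT_sub_left pairT_single_left

variable (q : ℝ)

lemma pairT_W1t_V1t : pairT (W1t q) (V1t q) = 1 + q ^ 4 := by
  simp [W1t, V1t]
  ring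

lemma pairT_Wm1t_Vm1t : pairT (Wm1t q) (Vm1t q) = 1 + q ^ 4 := by
  simp [Wm1t, Vm1t]
  ring

lemma pairT_W0t_V0t (hq : q ≠ 0) : pairT (W0t q) (V0t q) = q ^ 2 + q⁻¹ ^ 2 := by
  simp [W0t, V0t]
  field_simp
  ring

lemma pairT_W1t_V0t : pairT (W1t q) (V0t q) = 0 := by simp [W1t, V0t]

lemma pairT_W1t_Vm1t : pairT (W1t q) (Vm1t q) = 0 := by simp [W1t, Vm1t]

lemma pairT_W0t_V1t : pairT (W0t q) (V1t q) = 0 := by simp [W0t, V1t]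

lemma pairT_W0t_Vm1t : pairT (W0t q) (Vm1t q) = 0 := by simp [W0t, Vm1t]

lemma pairT_Wm1t_V1t : pairT (Wm1t q) (V1t q) = 0 := by simp [Wm1t, V1t]

lemma pairT_Wm1t_V0t : pairT (Wm1t q) (V0t q) = 0 := by simp [Wm1t, V0t]

end

theorem stmt_11_general (q : ℝ) (hq : q ≠ 0) :
    pairT ((q⁻¹ ^ 2 / (q ^ 2 + q⁻¹ ^ 2)) • W1t q) ((q⁻¹ ^ 2 / (q ^ 2 + q⁻¹ ^ 2)) • V1t q)
      = q⁻¹ ^ 2 / (q ^ 2 + q⁻¹ ^ 2) ∧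
    pairT ((q⁻¹ ^ 2 / (q ^ 2 + q⁻¹ ^ 2)) • Wm1t q) ((q⁻¹ ^ 2 / (q ^ 2 + q⁻¹ ^ 2)) • Vm1t q)
      = q⁻¹ ^ 2 / (q ^ 2 + q⁻¹ ^ 2) ∧
    pairT ((1 / (q ^ 2 + q⁻¹ ^ 2)) • W0t q) ((1 / (q ^ 2 + q⁻¹ ^ 2)) • V0t q)
      = 1 / (q ^ 2 + q⁻¹ ^ 2) ∧
    pairT ((q⁻¹ ^ 2 / (q ^ 2 + q⁻¹ ^ 2)) • W1t q) ((1 / (q ^ 2 + q⁻¹ ^ 2)) • V0t q) = 0 ∧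
    pairT ((q⁻¹ ^ 2 / (q ^ 2 + q⁻¹ ^ 2)) • W1t q) ((q⁻¹ ^ 2 / (q ^ 2 + q⁻¹ ^ 2)) • Vm1t q) = 0 ∧
    pairT ((1 / (q ^ 2 + q⁻¹ ^ 2)) • W0t q) ((q⁻¹ ^ 2 / (q ^ 2 + q⁻¹ ^ 2)) • V1t q) = 0 ∧
    pairT ((1 / (q ^ 2 + q⁻¹ ^ 2)) • W0t q) ((q⁻¹ ^ 2 / (q ^ 2 + q⁻¹ ^ 2)) • Vm1t q) = 0 ∧
    pairT ((q⁻¹ ^ 2 / (q ^ 2 + q⁻¹ ^ 2)) • Wm1t q) ((q⁻¹ ^ 2 / (q ^ 2 + q⁻¹ ^ 2)) • V1t q) = 0 ∧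
    pairT ((q⁻¹ ^ 2 / (q ^ 2 + q⁻¹ ^ 2)) • Wm1t q) ((1 / (q ^ 2 + q⁻¹ ^ 2)) • V0t q) = 0 := by
  simp only [pairT_smul_smul, pairT_W1t_V1t, pairT_Wm1t_Vm1t, pairT_W0t_V0t q hq, pairT_W1t_V0t,
    pairT_W1t_Vm1t, pairT_W0t_V1t, pairT_W0t_Vm1t, pairT_Wm1t_V1t, pairT_Wm1t_V0t, mul_zero,
    and_true]
  -- `field_simp` clears `q ^ 2 + q⁻¹ ^ 2`, which is positive since `q ≠ 0`
  refine ⟨?_, ?_, ?_⟩ <;> field_simp <;> ring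

/-- With the lifts π₋⁻¹, π₊⁻¹ of the degree-2 wedge monomials to antisymmetric tensors
(with the scalars q⁻²/[2]_{q²} resp. 1/[2]_{q²}), the nonzero degree-2 pairings are
⟨w₀∧w₁, v₁∧v₀⟩ = ⟨w₋₁∧w₀, v₀∧v₋₁⟩ = q⁻²/(q²+q⁻²) and
⟨w₋₁∧w₁, v₁∧v₋₁⟩ = 1/(q²+q⁻²), all other pairings of basis monomials being zero. -/
theorem stmt_11 (q : ℝ) (hq : q ≠ 0) (hd : q ^ 2 + q⁻¹ ^ 2 ≠ 0) :
    pairT ((q⁻¹ ^ 2 / (q ^ 2 + q⁻¹ ^ 2)) • W1t q) ((q⁻¹ ^ 2 / (q ^ 2 + q⁻¹ ^ 2)) • V1t q)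
      = q⁻¹ ^ 2 / (q ^ 2 + q⁻¹ ^ 2) ∧
    pairT ((q⁻¹ ^ 2 / (q ^ 2 + q⁻¹ ^ 2)) • Wm1t q) ((q⁻¹ ^ 2 / (q ^ 2 + q⁻¹ ^ 2)) • Vm1t q)
      = q⁻¹ ^ 2 / (q ^ 2 + q⁻¹ ^ 2) ∧
    pairT ((1 / (q ^ 2 + q⁻¹ ^ 2)) • W0t q) ((1 / (q ^ 2 + q⁻¹ ^ 2)) • V0t q)
      = 1 / (q ^ 2 + q⁻¹ ^ 2) ∧
    pairT ((q⁻¹ ^ 2 / (q ^ 2 + q⁻¹ ^ 2)) • W1t q) ((1 / (q ^ 2 + q⁻¹ ^ 2)) • V0t q) = 0 ∧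
    pairT ((q⁻¹ ^ 2 / (q ^ 2 + q⁻¹ ^ 2)) • W1t q) ((q⁻¹ ^ 2 / (q ^ 2 + q⁻¹ ^ 2)) • Vm1t q) = 0 ∧
    pairT ((1 / (q ^ 2 + q⁻¹ ^ 2)) • W0t q) ((q⁻¹ ^ 2 / (q ^ 2 + q⁻¹ ^ 2)) • V1t q) = 0 ∧
    pairT ((1 / (q ^ 2 + q⁻¹ ^ 2)) • W0t q) ((q⁻¹ ^ 2 / (q ^ 2 + q⁻¹ ^ 2)) • Vm1t q) = 0 ∧
    pairT ((q⁻¹ ^ 2 / (q ^ 2 + q⁻¹ ^ 2)) • Wm1t q) ((q⁻¹ ^ 2 / (q ^ 2 + q⁻¹ ^ 2)) • V1t q) = 0 ∧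
    pairT ((q⁻¹ ^ 2 / (q ^ 2 + q⁻¹ ^ 2)) • Wm1t q) ((1 / (q ^ 2 + q⁻¹ ^ 2)) • V0t q) = 0 :=
  stmt_11_general q hq
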